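/- arXiv:1009.2892 — 5 statements merged into one kernel-verified Lean document; each statement's English description precedes it below -/
import Mathlib

section
/- If a semilattice S is generated by T ∪ {x₁} and also by T ∪ {x₂}, where T is a subsemilattice of S and x₁, x₂ ∈ S \ T, then x₁ = x₂. That is, one-point extensions of semilattices are uniquely generated. -/
lemma one_point_ext_form {S : Type*} [Semigroup S]
    (comm : ∀ a b : S, a * b = b * a) (idem : ∀ a : S, a * a = a)
    (T : Subsemigroup S) (x : S) {y : S}
    (hy : y ∈ Subsemigroup.closure ((T : Set S) ∪ {x})) :
    y ∈ T ∨ y = x ∨ ∃ t ∈ T, y = x * t := by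
  have key : ∀ t : S, x * t * x = x * t := fun t => by
    rw [mul_assoc, comm t x, ← mul_assoc, idem]
  induction hy using Subsemigroup.closure_induction with
  | mem z hz =>
    rcases hz with hz | hz
    · exact Or.inl hz
    · exact Or.inr (Or.inl hz)
  | mul a b _ _ ha hb =>
    rcases ha with ha | ha | ⟨t, ht, rfl⟩ <;> rcases hb with hb | hb | ⟨s, hs, rfl⟩
    · exact Or.inl (T.mul_mem ha hb)
    · refine Or.inr (Or.inr ⟨a, ha, ?_⟩)
      rw [show b = x from hb, comm a x]
    · refine Or.inr (Or.inr ⟨a * s, T.mul_mem ha hs, ?_⟩)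
      rw [comm a (x * s), mul_assoc, comm s a]
    · refine Or.inr (Or.inr ⟨b, hb, ?_⟩)
      rw [show a = x from ha]
    · rw [show a = x from ha, show b = x from hb]
      exact Or.inr (Or.inl (idem x))
    · rw [show a = x from ha]
      refine Or.inr (Or.inr ⟨s, hs, ?_⟩)
      rw [← mul_assoc, idem]
    · exact Or.inr (Or.inr ⟨t * b, T.mul_mem ht hb, mul_assoc _ _ _⟩)
    · refine Or.inr (Or.inr ⟨t, ht, ?_⟩)
      rw [show b = x from hb, key]
    · refine Or.inr (Or.inr ⟨t * s, T.mul_mem ht hs, ?_⟩)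
      rw [← mul_assoc (x * t) x s, key, mul_assoc]

/-- One-point extensions of semilattices are uniquely generated: if a semilattice `S`
(a commutative idempotent semigroup) is generated both by `T ∪ {x₁}` and by `T ∪ {x₂}`,
where `T` is a subsemilattice and `x₁, x₂ ∉ T`, then `x₁ = x₂`. -/
theorem uniquely_generated_one_point_extension_semilattice
    {S : Type*} [Semigroup S]
    (comm : ∀ a b : S, a * b = b * a) (idem : ∀ a : S, a * a = a)
    (T : Subsemigroup S) (x₁ x₂ : S)
    (hx₁ : x₁ ∉ T) (hx₂ : x₂ ∉ T)
    (hgen₁ : Subsemigroup.closure ((T : Set S) ∪ {x₁}) = ⊤)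
    (hgen₂ : Subsemigroup.closure ((T : Set S) ∪ {x₂}) = ⊤) :
    x₁ = x₂ := by
  have h₂ : x₂ ∈ Subsemigroup.closure ((T : Set S) ∪ {x₁}) := hgen₁ ▸ trivial
  have h₁ : x₁ ∈ Subsemigroup.closure ((T : Set S) ∪ {x₂}) := hgen₂ ▸ trivial
  rcases one_point_ext_form comm idem T x₁ h₂ with h | h | ⟨t, ht, ht'⟩
  · exact absurd h hx₂
  · exact h.symm
  rcases one_point_ext_form comm idem T x₂ h₁ with h | h | ⟨s, hs, hs'⟩
  · exact absurd h hx₁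
  · exact h
  -- x₂ = x₁ * t, x₁ = x₂ * s = x₁ * t * s
  have h : x₁ = x₁ * t * s := by rw [← ht', ← hs']
  calc x₁ = x₁ * t * s := h
    _ = x₁ * t * s * t := by
        rw [mul_assoc (x₁ * t) s t, comm s t, ← mul_assoc (x₁ * t) t s,
          mul_assoc x₁ t t, idem]
    _ = x₂ * s * t := by rw [← ht']
    _ = x₁ * t := by rw [← hs']
    _ = x₂ := ht'.symm
end

section
/- Every semilattice has the congruence extension property: for every subsemilattice B of a semilattice A and every semilattice congruence ρ on B, there is a congruence θ on A whose restriction to B × B equals ρ. -/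
/-- Every semilattice (commutative idempotent semigroup) has the congruence extension
property: every congruence of a subsemilattice `B` of `A` is the restriction of some
congruence of `A`. -/
theorem semilattice_congruence_extension_property
    {A : Type*} [Semigroup A]
    (comm : ∀ a b : A, a * b = b * a) (idem : ∀ a : A, a * a = a)
    (B : Subsemigroup A) (ρ : Con B) :
    ∃ θ : Con A, Con.comap (Subtype.val : B → A) (fun _ _ => rfl) θ = ρ := by
  letI : CommSemigroup A := { ‹Semigroup A› with mul_comm := comm }
  -- `P x y` : every ρ-class represented below `x` is represented below `y`.
  set P : A → A → Prop := fun x y =>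
    ∀ b : B, (b : A) * x = b → ∃ b' : B, ρ b b' ∧ (b' : A) * y = (b' : A) with hP
  have Ptrans : ∀ {x y z}, P x y → P y z → P x z := by
    intro x y z h1 h2 b hb
    obtain ⟨b', hbb', hb'⟩ := h1 b hb
    obtain ⟨b'', hb'b'', hb''⟩ := h2 b' hb'
    exact ⟨b'', ρ.trans hbb' hb'b'', hb''⟩
  have Prefl : ∀ x, P x x := fun x b hb => ⟨b, ρ.refl b, hb⟩
  have idem' : ∀ a t : A, a * (a * t) = a * t := fun a t => by
    rw [← mul_assoc, idem]
  have Pmul : ∀ x y c, P x y → P (x * c) (y * c) := by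
    intro x y c h b hb
    have hbx : (b : A) * x = b := by
      have h1 : ((b : A) * (x * c)) * x = (b : A) * (x * c) := by
        simp [mul_assoc, mul_comm, mul_left_comm, idem, idem']
      rw [hb] at h1; exact h1
    have hbc : (b : A) * c = b := by
      have h1 : ((b : A) * (x * c)) * c = (b : A) * (x * c) := by
        simp [mul_assoc, mul_comm, mul_left_comm, idem, idem']
      rw [hb] at h1; exact h1
    obtain ⟨b', hbb', hb'⟩ := h b hbx
    refine ⟨b' * b, ?_, ?_⟩
    · have := ρ.mul hbb' (ρ.refl b)
      have hbb : b * b = b := Subtype.ext (by simpa using idem (b : A))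
      exact ρ.symm (by simpa [hbb] using ρ.symm this)
    · show ((b' : A) * b) * (y * c) = (b' : A) * b
      have step : ((b' : A) * b) * (y * c) = ((b' : A) * y) * ((b : A) * c) := by
        simp [mul_assoc, mul_comm, mul_left_comm]
      rw [step, hb', hbc]
  refine ⟨⟨⟨fun x y => P x y ∧ P y x, ⟨fun x => ⟨Prefl x, Prefl x⟩,
      fun h => ⟨h.2, h.1⟩, fun h1 h2 => ⟨Ptrans h1.1 h2.1, Ptrans h2.2 h1.2⟩⟩⟩, ?_⟩, ?_⟩
  · -- multiplicativity
    intro w x y z hwx hyz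
    have h1 : P (w * y) (x * y) ∧ P (x * y) (w * y) :=
      ⟨Pmul _ _ _ hwx.1, Pmul _ _ _ hwx.2⟩
    have h2 : P (y * x) (z * x) ∧ P (z * x) (y * x) :=
      ⟨Pmul _ _ _ hyz.1, Pmul _ _ _ hyz.2⟩
    rw [mul_comm y x, mul_comm z x] at h2
    exact ⟨Ptrans h1.1 h2.1, Ptrans h2.2 h1.2⟩
  · -- restriction to B equals ρ
    ext x y
    show P (x : A) (y : A) ∧ P (y : A) (x : A) ↔ ρ x y
    constructor
    · rintro ⟨h1, h2⟩
      obtain ⟨b', hxb', hb'⟩ := h1 x (idem (x : A))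
      obtain ⟨b'', hyb'', hb''⟩ := h2 y (idem (y : A))
      -- b' = b' * y,  b'' = b'' * x
      have e1 : b' = b' * y := Subtype.ext (by simpa using hb'.symm)
      have e2 : b'' = b'' * x := Subtype.ext (by simpa using hb''.symm)
      have c1 : ρ x (b' * b'') := by
        have h : ρ (b' * y) (b' * b'') := ρ.mul (ρ.refl b') hyb''
        rw [← e1] at h
        exact ρ.trans hxb' h
      have c2 : ρ y (b'' * b') := by
        have h : ρ (b'' * x) (b'' * b') := ρ.mul (ρ.refl b'') hxb'
        rw [← e2] at h
        exact ρ.trans hyb'' h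
      have e3 : b' * b'' = b'' * b' := Subtype.ext (by simpa using comm (b' : A) b'')
      exact ρ.trans c1 (e3 ▸ ρ.symm c2)
    · intro hxy
      constructor
      · intro b hb
        refine ⟨b * y, ?_, ?_⟩
        · have e : b = b * x := Subtype.ext (by simpa using hb.symm)
          have h : ρ (b * x) (b * y) := ρ.mul (ρ.refl b) hxy
          rw [← e] at h; exact h
        · show ((b : A) * y) * y = (b : A) * y
          rw [mul_assoc, idem]
      · intro b hb
        refine ⟨b * x, ?_, ?_⟩
        · have e : b = b * y := Subtype.ext (by simpa using hb.symm)
          have h : ρ (b * y) (b * x) := ρ.mul (ρ.refl b) (ρ.symm hxy)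
          rw [← e] at h; exact h
        · show ((b : A) * x) * x = (b : A) * x
          rw [mul_assoc, idem]
end

section
/- Let X be a metric space, Y = X ∪ {x*} a metric one-point extension of X, and f : X → X' a surjective non-expanding map onto a finite metric space X', with X finite. Define P = X' ∪ {y*} with d_P extending d_{X'} and d_P(y*, x) = min over w ∈ X of (d_Y(x*, w) + d_{X'}(f(w), x)). Then d_P is a metric on P. -/
open Finset

/-- The pushout distance on `P = X' ∪ {y*}` (here `Option X'`, with `none` playing the role
of the new point `y*`): it extends the metric of `X'`, and the distance from `y*` to
`x ∈ X'` is `min_{w ∈ X} (d_Y(x*, w) + d_{X'}(f(w), x))`, where `Y = X ∪ {x*}` is encoded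
as `Option X` with `none = x*` and metric `dY`. -/
noncomputable def pushoutDist {X X' : Type*} [Fintype X] [Nonempty X] [MetricSpace X']
    (dY : Option X → Option X → ℝ) (f : X → X') : Option X' → Option X' → ℝ
  | some a, some b => dist a b
  | some a, none => univ.inf' univ_nonempty fun w => dY none (some w) + dist (f w) a
  | none, some b => univ.inf' univ_nonempty fun w => dY none (some w) + dist (f w) b
  | none, none => 0

/-- Let `X` be a finite metric space, `Y = X ∪ {x*}` a metric one-point extension of `X`
(encoded as `Option X` with metric `dY` extending that of `X`), and `f : X → X'` a
surjective non-expanding map onto a finite metric space `X'`. Then the pushout distance on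
`P = X' ∪ {y*}` is a metric: it vanishes exactly on the diagonal, is positive off the
diagonal, symmetric, and satisfies the triangle inequality. -/
theorem pushoutDist_is_metric {X X' : Type*} [Fintype X] [Nonempty X]
    [MetricSpace X] [MetricSpace X'] [Fintype X']
    (dY : Option X → Option X → ℝ)
    (dY_self : ∀ u, dY u u = 0)
    (dY_pos : ∀ u v, u ≠ v → 0 < dY u v)
    (dY_symm : ∀ u v, dY u v = dY v u)
    (dY_triangle : ∀ u v w, dY u w ≤ dY u v + dY v w)
    (dY_ext : ∀ a b : X, dY (some a) (some b) = dist a b)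
    (f : X → X') (hf_surj : Function.Surjective f)
    (hf_nonexp : ∀ a b : X, dist (f a) (f b) ≤ dist a b) :
    (∀ u, pushoutDist dY f u u = 0) ∧
    (∀ u v, u ≠ v → 0 < pushoutDist dY f u v) ∧
    (∀ u v, pushoutDist dY f u v = pushoutDist dY f v u) ∧
    (∀ u v w, pushoutDist dY f u w ≤ pushoutDist dY f u v + pushoutDist dY f v w) := by
  -- positivity of inf for `none, some b`
  have hpos : ∀ b : X', 0 < univ.inf' univ_nonempty
      (fun w : X => dY none (some w) + dist (f w) b) := by
    intro b
    rw [Finset.lt_inf'_iff]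
    intro w _
    have h1 : 0 < dY none (some w) := dY_pos _ _ (by simp)
    have h2 : (0:ℝ) ≤ dist (f w) b := dist_nonneg
    linarith
  refine ⟨?_, ?_, ?_, ?_⟩
  · rintro (_ | a) <;> simp [pushoutDist]
  · rintro (_ | a) (_ | b) h
    · exact absurd rfl h
    · exact hpos b
    · exact hpos a
    · exact dist_pos.mpr (by simpa using h)
  · rintro (_ | a) (_ | b) <;> simp [pushoutDist, dist_comm]
  · rintro (_ | a) (_ | b) (_ | c)
    · simp [pushoutDist]
    · -- none none some c
      simp only [pushoutDist]
      linarith [hpos c]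
    · -- none some b none
      simp only [pushoutDist]
      linarith [hpos b]
    · -- none some b some c
      simp only [pushoutDist]
      obtain ⟨w, -, hw⟩ := Finset.exists_mem_eq_inf' (univ_nonempty (α := X))
        (fun w : X => dY none (some w) + dist (f w) b)
      rw [hw]
      refine le_trans (Finset.inf'_le _ (Finset.mem_univ w)) ?_
      have := dist_triangle (f w) b c
      linarith
    · -- some a none none
      simp only [pushoutDist]
      linarith [hpos a]
    · -- some a none some c
      simp only [pushoutDist]
      obtain ⟨w1, -, hw1⟩ := Finset.exists_mem_eq_inf' (univ_nonempty (α := X))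
        (fun w : X => dY none (some w) + dist (f w) a)
      obtain ⟨w2, -, hw2⟩ := Finset.exists_mem_eq_inf' (univ_nonempty (α := X))
        (fun w : X => dY none (some w) + dist (f w) c)
      rw [hw1, hw2]
      have h1 : dist (f w1) (f w2) ≤ dist w1 w2 := hf_nonexp _ _
      have h2 : dY (some w1) (some w2) = dist w1 w2 := dY_ext _ _
      have h3 := dY_triangle (some w1) none (some w2)
      have h4 : dY (some w1) none = dY none (some w1) := dY_symm _ _
      have h5 := dist_triangle a (f w1) (f w2)
      have h6 := dist_triangle a (f w2) c
      have h7 : dist a (f w1) = dist (f w1) a := dist_comm _ _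
      have h8 : dist a (f w2) = dist (f w2) a := dist_comm _ _
      have h9 : dist (f w2) a ≤ dist (f w2) (f w1) + dist (f w1) a := dist_triangle _ _ _
      have h10 : dist (f w2) (f w1) = dist (f w1) (f w2) := dist_comm _ _
      linarith
    · -- some a some b none
      simp only [pushoutDist]
      obtain ⟨w, -, hw⟩ := Finset.exists_mem_eq_inf' (univ_nonempty (α := X))
        (fun w : X => dY none (some w) + dist (f w) b)
      rw [hw]
      refine le_trans (Finset.inf'_le _ (Finset.mem_univ w)) ?_
      have := dist_triangle (f w) b a
      have : dist (f w) a ≤ dist (f w) b + dist b a := dist_triangle _ _ _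
      have hba : dist b a = dist a b := dist_comm _ _
      linarith
    · exact dist_triangle a b c
end

section
/- With the setup of the metric pushout construction (X finite metric space, Y = X ∪ {x*} a one-point metric extension, f : X → X' surjective non-expanding, P = X' ∪ {y*} with the induced metric, g : Y → P extending f with g(x*) = y*), g is non-expanding, and for any metric space Z with non-expanding maps μ : Y → Z and ν : X' → Z satisfying ν ∘ f = μ restricted to X, the unique map u : P → Z with u|X' = ν and u(y*) = μ(x*) is non-expanding. -/
open Finset

/-- With the setup of the metric pushout construction: `X` a finite metric space,
`Y = X ∪ {x*}` a one-point metric extension, `f : X → X'` surjective non-expanding,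
`P = X' ∪ {y*}` with the induced metric and `g = Option.map f : Y → P` (so `g(x*) = y*`):
`g` is non-expanding, and for every metric space `Z` with non-expanding maps `μ : Y → Z`,
`ν : X' → Z` satisfying `ν ∘ f = μ|X`, the unique map `u : P → Z` with `u|X' = ν` and
`u(y*) = μ(x*)` is non-expanding. -/
theorem pushoutDist_universal_nonexpanding {X X' Z : Type*} [Fintype X] [Nonempty X]
    [MetricSpace X] [MetricSpace X'] [MetricSpace Z]
    (dY : Option X → Option X → ℝ)
    (dY_self : ∀ u, dY u u = 0)
    (dY_pos : ∀ u v, u ≠ v → 0 < dY u v)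
    (dY_symm : ∀ u v, dY u v = dY v u)
    (dY_triangle : ∀ u v w, dY u w ≤ dY u v + dY v w)
    (dY_ext : ∀ a b : X, dY (some a) (some b) = dist a b)
    (f : X → X') (hf_surj : Function.Surjective f)
    (hf_nonexp : ∀ a b : X, dist (f a) (f b) ≤ dist a b)
    (μ : Option X → Z) (ν : X' → Z)
    (hμ : ∀ u v, dist (μ u) (μ v) ≤ dY u v)
    (hν : ∀ a b, dist (ν a) (ν b) ≤ dist a b)
    (hcomp : ∀ a : X, ν (f a) = μ (some a)) :
    (∀ u v : Option X, pushoutDist dY f (Option.map f u) (Option.map f v) ≤ dY u v) ∧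
    (∀ p q : Option X',
      dist (p.elim (μ none) ν) (q.elim (μ none) ν) ≤ pushoutDist dY f p q) := by
  constructor
  · rintro (_ | a) (_ | b)
    · simp [pushoutDist, dY_self]
    · calc univ.inf' univ_nonempty (fun w => dY none (some w) + dist (f w) (f b))
          ≤ dY none (some b) + dist (f b) (f b) := inf'_le _ (mem_univ b)
        _ = dY none (some b) := by simp
    · calc univ.inf' univ_nonempty (fun w => dY none (some w) + dist (f w) (f a))
          ≤ dY none (some a) + dist (f a) (f a) := inf'_le _ (mem_univ a)
        _ = dY none (some a) := by simp
        _ = dY (some a) none := dY_symm _ _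
    · calc dist (f a) (f b) ≤ dist a b := hf_nonexp a b
        _ = dY (some a) (some b) := (dY_ext a b).symm
  · rintro (_ | a) (_ | b)
    · simp [pushoutDist]
    · refine le_inf' univ_nonempty _ fun w _ => ?_
      calc dist (μ none) (ν b)
          ≤ dist (μ none) (μ (some w)) + dist (μ (some w)) (ν b) := dist_triangle _ _ _
        _ ≤ dY none (some w) + dist (f w) b := by
            refine add_le_add (hμ _ _) ?_
            rw [← hcomp w]; exact hν _ _
    · refine le_inf' univ_nonempty _ fun w _ => ?_
      calc dist (ν a) (μ none)
          ≤ dist (ν a) (ν (f w)) + dist (ν (f w)) (μ none) := dist_triangle _ _ _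
        _ ≤ dist (f w) a + dY none (some w) := by
            refine add_le_add ?_ ?_
            · rw [dist_comm (f w) a]; exact hν _ _
            · rw [hcomp w, dY_symm]; exact hμ _ _
        _ = dY none (some w) + dist (f w) a := add_comm _ _
    · exact hν a b
end

section
/- In the amalgamated metric space M = X ∪ Z defined by the shortest-path formula over Y = X ∩ Z, given any metric space M' and non-expanding maps f : X → M' and g : Z → M' agreeing on Y, the common extension h = f ∪ g : M → M' is non-expanding. -/
open Finset

/-- The shortest-path amalgamated distance on `M = X ∪ Z` over the common part `Y`
(`X = Y ⊕ X₀`, `Z = Y ⊕ Z₀`, `M = (Y ⊕ X₀) ⊕ Z₀`). -/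
noncomputable def amalgamDist {Y X₀ Z₀ : Type*} [Fintype Y] [Nonempty Y]
    (dX : Y ⊕ X₀ → Y ⊕ X₀ → ℝ) (dZ : Y ⊕ Z₀ → Y ⊕ Z₀ → ℝ) :
    (Y ⊕ X₀) ⊕ Z₀ → (Y ⊕ X₀) ⊕ Z₀ → ℝ
  | Sum.inl a, Sum.inl b => dX a b
  | Sum.inr z, Sum.inr z' => dZ (Sum.inr z) (Sum.inr z')
  | Sum.inl (Sum.inl y), Sum.inr z => dZ (Sum.inl y) (Sum.inr z)
  | Sum.inr z, Sum.inl (Sum.inl y) => dZ (Sum.inr z) (Sum.inl y)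
  | Sum.inl (Sum.inr x), Sum.inr z =>
      univ.inf' univ_nonempty fun y : Y => dX (Sum.inr x) (Sum.inl y) + dZ (Sum.inl y) (Sum.inr z)
  | Sum.inr z, Sum.inl (Sum.inr x) =>
      univ.inf' univ_nonempty fun y : Y => dX (Sum.inr x) (Sum.inl y) + dZ (Sum.inl y) (Sum.inr z)

/-- In the amalgamated metric space `M = X ∪ Z` over `Y = X ∩ Z`: given any metric space
`M'` and non-expanding maps `f : X → M'` and `g : Z → M'` agreeing on `Y`, the common
extension `h = f ∪ g : M → M'` is non-expanding. -/
theorem amalgam_common_extension_nonexpanding {Y X₀ Z₀ M' : Type*}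
    [Fintype Y] [Nonempty Y] [Fintype X₀] [Fintype Z₀] [MetricSpace M']
    (dX : Y ⊕ X₀ → Y ⊕ X₀ → ℝ) (dZ : Y ⊕ Z₀ → Y ⊕ Z₀ → ℝ)
    (dX_self : ∀ u, dX u u = 0) (dX_pos : ∀ u v, u ≠ v → 0 < dX u v)
    (dX_symm : ∀ u v, dX u v = dX v u)
    (dX_triangle : ∀ u v w, dX u w ≤ dX u v + dX v w)
    (dZ_self : ∀ u, dZ u u = 0) (dZ_pos : ∀ u v, u ≠ v → 0 < dZ u v)
    (dZ_symm : ∀ u v, dZ u v = dZ v u)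
    (dZ_triangle : ∀ u v w, dZ u w ≤ dZ u v + dZ v w)
    (agree : ∀ y y' : Y, dX (Sum.inl y) (Sum.inl y') = dZ (Sum.inl y) (Sum.inl y'))
    (f : Y ⊕ X₀ → M') (g : Y ⊕ Z₀ → M')
    (hf : ∀ a b, dist (f a) (f b) ≤ dX a b)
    (hg : ∀ c d, dist (g c) (g d) ≤ dZ c d)
    (hagree : ∀ y : Y, f (Sum.inl y) = g (Sum.inl y)) :
    ∀ u v : (Y ⊕ X₀) ⊕ Z₀,
      dist (Sum.elim f (fun z => g (Sum.inr z)) u) (Sum.elim f (fun z => g (Sum.inr z)) v) ≤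
        amalgamDist dX dZ u v := by
  rintro (a | z) (b | z')
  · simpa [amalgamDist] using hf a b
  · rcases a with y | x
    · simpa [amalgamDist, hagree] using hg (Sum.inl y) (Sum.inr z')
    · simp only [amalgamDist, Sum.elim_inl, Sum.elim_inr]
      apply Finset.le_inf'
      intro y _
      calc dist (f (Sum.inr x)) (g (Sum.inr z')) ≤
          dist (f (Sum.inr x)) (f (Sum.inl y)) + dist (f (Sum.inl y)) (g (Sum.inr z')) :=
            dist_triangle _ _ _
        _ ≤ _ := add_le_add (hf _ _) (by rw [hagree y]; exact hg _ _)
  · rcases b with y | x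
    · rw [dist_comm]
      simp only [amalgamDist, Sum.elim_inl, Sum.elim_inr, hagree]
      rw [dZ_symm]
      exact hg _ _
    · simp only [amalgamDist, Sum.elim_inl, Sum.elim_inr]
      apply Finset.le_inf'
      intro y _
      rw [dist_comm]
      calc dist (f (Sum.inr x)) (g (Sum.inr z)) ≤
          dist (f (Sum.inr x)) (f (Sum.inl y)) + dist (f (Sum.inl y)) (g (Sum.inr z)) :=
            dist_triangle _ _ _
        _ ≤ _ := add_le_add (hf _ _) (by rw [hagree y]; exact hg _ _)
  · simpa [amalgamDist] using hg (Sum.inr z) (Sum.inr z')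
end
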